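/- Let k be a field of characteristic p > 2, G = ℤ/nℤ with p | n and generator g, and let H be the smash product algebra of k⟨a,b⟩/⟨ba - ab - (1/2)a²⟩ with kG, where g acts by a·g = a and b·g = a + b. Then in H, for all r, ℓ ≥ 1: b^r g^ℓ = ∑_{k'=0}^{r} binom(r,k') (1/2^{k'}) (2ℓ)^{(k')} g^ℓ a^{k'} b^{r-k'}, where (2ℓ)^{(k')} is the rising factorial 2ℓ(2ℓ+1)⋯(2ℓ+k'-1) in k. -/

import Mathlib

noncomputable section

/-- The rising factorial `x^(k) = x(x+1)⋯(x+k-1)` in a commutative ring. -/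
def risingFactorial {R : Type*} [CommRing R] (x : R) (k : ℕ) : R :=
  ∏ i ∈ Finset.range k, (x + i)

variable (k : Type*) [Field k]

def gF : FreeAlgebra k (Fin 3) := FreeAlgebra.ι k 0

def aF : FreeAlgebra k (Fin 3) := FreeAlgebra.ι k 1

def bF : FreeAlgebra k (Fin 3) := FreeAlgebra.ι k 2

/-- Relations of the smash product `(k⟨a,b⟩/⟨ba - ab - (1/2)a²⟩) # kG`:
`g^n = 1`, `ag = ga`, `bg = ga + gb`, `ba = ab + (1/2)a²`. -/
def relH (n : ℕ) : FreeAlgebra k (Fin 3) → FreeAlgebra k (Fin 3) → Prop :=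
  fun x y =>
    (x = (gF k) ^ n ∧ y = 1) ∨
    (x = aF k * gF k ∧ y = gF k * aF k) ∨
    (x = bF k * gF k ∧ y = gF k * aF k + gF k * bF k) ∨
    (x = bF k * aF k ∧ y = aF k * bF k + ((2 : k)⁻¹) • (aF k) ^ 2)

/-- The smash product algebra `H = (k⟨a,b⟩/⟨ba - ab - (1/2)a²⟩) # kG`. -/
abbrev H (n : ℕ) := RingQuot (relH k n)

def gH (n : ℕ) : H k n := RingQuot.mkAlgHom k (relH k n) (gF k)

def aH (n : ℕ) : H k n := RingQuot.mkAlgHom k (relH k n) (aF k)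

def bH (n : ℕ) : H k n := RingQuot.mkAlgHom k (relH k n) (bF k)

/-!
Conjugation by `g` fixes `a` and sends `b` to `a + b`, so `b ^ r * g ^ ℓ = g ^ ℓ * c ^ r` with
`c = ℓ a + b`. Since `c` satisfies the same relation `c a = a c + ½ a²` as `b`, we get
`c a ^ i = a ^ i c + (i / 2) a ^ (i + 1)`. Expanding `c ^ r` in the monomials `a ^ i b ^ j` then
follows Pascal's rule, except that each step raising the `a`-degree from `i` to `i + 1`
carries the weight `ℓ + i / 2 = (2ℓ + i) / 2`.
-/

open Finset

section SkewBinomial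

variable {R A : Type*} [CommSemiring R] [Semiring A] [Algebra R A] {x y : A} {t : R}

theorem mul_pow_of_mul_eq_add_smul_sq (hxy : x * y = y * x + t • y ^ 2) (m : ℕ) :
    x * y ^ m = y ^ m * x + (m * t) • y ^ (m + 1) := by
  induction m with
  | zero => simp
  | succ m ih =>
    calc x * y ^ (m + 1) = (y ^ m * x + (m * t) • y ^ (m + 1)) * y := by
          rw [← ih, mul_assoc, ← pow_succ]
      _ = y ^ (m + 1) * x + ((m + 1 : ℕ) * t) • y ^ (m + 2) := by
          rw [add_mul, mul_assoc, hxy, mul_add, smul_mul_assoc, mul_smul_comm, ← mul_assoc,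
            ← pow_succ, ← pow_add, ← pow_succ]
          push_cast
          rw [add_mul, one_mul, add_smul, add_assoc, add_comm (t • _)]

theorem smul_add_mul_pow_mul_pow (hxy : x * y = y * x + t • y ^ 2) (s : R) (i j : ℕ) :
    (s • y + x) * (y ^ i * x ^ j) =
      (s + i * t) • (y ^ (i + 1) * x ^ j) + y ^ i * x ^ (j + 1) := by
  rw [add_mul, ← mul_assoc, ← mul_assoc, mul_pow_of_mul_eq_add_smul_sq hxy, smul_mul_assoc,
    ← pow_succ', add_mul, smul_mul_assoc, smul_mul_assoc, mul_assoc, ← pow_succ', add_smul]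
  abel

theorem smul_add_pow_eq_sum (hxy : x * y = y * x + t • y ^ 2) (s : R) (r : ℕ) :
    (s • y + x) ^ r = ∑ i ∈ range (r + 1),
      ((r.choose i : R) * ∏ j ∈ range i, (s + j * t)) • (y ^ i * x ^ (r - i)) := by
  simp only [mul_smul, Nat.cast_smul_eq_nsmul]
  induction r with
  | zero => simp
  | succ r ih =>
    rw [pow_succ', ih, mul_sum,
      sum_choose_succ_nsmul (fun i j ↦ (∏ l ∈ range i, (s + l * t)) • (y ^ i * x ^ j)),
      ← sum_add_distrib]
    refine sum_congr rfl fun i hi ↦ ?_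
    have hir : r + 1 - i = r - i + 1 := by grind
    rw [mul_smul_comm, mul_smul_comm, smul_add_mul_pow_mul_pow hxy, prod_range_succ, mul_smul,
      smul_add, smul_add, hir, add_comm]

end SkewBinomial

theorem mul_pow_eq_pow_mul_nsmul_add {A : Type*} [Semiring A] {a b g : A}
    (hag : a * g = g * a) (hbg : b * g = g * a + g * b) (ℓ : ℕ) :
    b * g ^ ℓ = g ^ ℓ * (ℓ • a + b) := by
  induction ℓ with
  | zero => simp
  | succ ℓ ih =>
    rw [pow_succ, ← mul_assoc, ih, mul_assoc, add_mul, smul_mul_assoc, hag, hbg, mul_assoc,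
      succ_nsmul, add_assoc, mul_add g, mul_add g, mul_smul_comm]

theorem pow_mul_pow_eq_pow_mul_nsmul_add_pow {A : Type*} [Semiring A] {a b g : A}
    (hag : a * g = g * a) (hbg : b * g = g * a + g * b) (r ℓ : ℕ) :
    b ^ r * g ^ ℓ = g ^ ℓ * (ℓ • a + b) ^ r :=
  ((SemiconjBy.pow_right (mul_pow_eq_pow_mul_nsmul_add hag hbg ℓ).symm r).symm)

theorem prod_range_add_mul_inv {K : Type*} [Field K] {c : K} (hc : c ≠ 0) (s : K) (i : ℕ) :
    ∏ j ∈ range i, (s + j * c⁻¹) = c⁻¹ ^ i * risingFactorial (c * s) i := by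
  rw [risingFactorial, ← card_range i, ← prod_const, card_range, ← prod_mul_distrib]
  refine prod_congr rfl fun j _ ↦ ?_
  field_simp

section Relations

variable {k} (n : ℕ)

theorem aH_mul_gH : aH k n * gH k n = gH k n * aH k n := by
  simp only [aH, gH, ← map_mul]
  exact RingQuot.mkAlgHom_rel k (Or.inr (Or.inl ⟨rfl, rfl⟩))

theorem bH_mul_gH : bH k n * gH k n = gH k n * aH k n + gH k n * bH k n := by
  simp only [aH, bH, gH, ← map_mul, ← map_add]
  exact RingQuot.mkAlgHom_rel k (Or.inr (Or.inr (Or.inl ⟨rfl, rfl⟩)))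

theorem bH_mul_aH : bH k n * aH k n = aH k n * bH k n + (2 : k)⁻¹ • aH k n ^ 2 := by
  simp only [aH, bH, ← map_mul, ← map_pow, ← map_smul, ← map_add]
  exact RingQuot.mkAlgHom_rel k (Or.inr (Or.inr (Or.inr ⟨rfl, rfl⟩)))

end Relations

theorem bpow_mul_gpow (p n : ℕ) (hp : 2 < p) [CharP k p]
    (r ℓ : ℕ) :
    (bH k n) ^ r * (gH k n) ^ ℓ =
      ∑ k' ∈ Finset.range (r + 1),
        ((r.choose k' : k) * ((2 : k)⁻¹) ^ k' * risingFactorial ((2 * ℓ : ℕ) : k) k') •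
          ((gH k n) ^ ℓ * (aH k n) ^ k' * (bH k n) ^ (r - k')) := by
  have h2 : (2 : k) ≠ 0 := Ring.two_ne_zero (by rw [ringChar.eq k p]; omega)
  rw [pow_mul_pow_eq_pow_mul_nsmul_add_pow (aH_mul_gH n) (bH_mul_gH n),
    ← Nat.cast_smul_eq_nsmul k, smul_add_pow_eq_sum (bH_mul_aH n), mul_sum]
  refine sum_congr rfl fun i _ ↦ ?_
  rw [prod_range_add_mul_inv h2, mul_smul_comm, ← mul_assoc, ← mul_assoc, Nat.cast_mul,
    Nat.cast_ofNat]
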